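/- Fix complex constants α0, α1 and t ∈ ℂ with t ≠ 0. The transition map r₁ : (x, y, z) ↦ (x₁, y₁, z₁) = (x, −(yz + (2(2α1−1)x + 2α0)/t²)·z, 1/z), defined on {(x,y,z) ∈ ℂ³ : z ≠ 0}, is differentiable and the determinant of its Jacobian matrix of partial derivatives with respect to (x, y, z) is identically equal to 1; in particular r₁ preserves the 3-form, dx₁ ∧ dy₁ ∧ dz₁ = dx ∧ dy ∧ dz. -/

import Mathlib

/-- First component of the transition map `r₁`. -/
noncomputable def r1f1 (α0 α1 t x y z : ℂ) : ℂ := x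

/-- Second component of the transition map `r₁`. -/
noncomputable def r1f2 (α0 α1 t x y z : ℂ) : ℂ :=
  -(y * z + (2 * (2 * α1 - 1) * x + 2 * α0) / t ^ 2) * z

/-- Third component of the transition map `r₁`. -/
noncomputable def r1f3 (α0 α1 t x y z : ℂ) : ℂ := 1 / z

/-! The first and last rows of the Jacobian are `(1, 0, 0)` and `(0, 0, -1/z²)`, so its determinant
is `∂y₁/∂y · (-1/z²) = (-z²) · (-1/z²) = 1`. -/

theorem Matrix.det_fin_three_of_outer_rows_diagonal {R : Type*} [CommRing R] (e a b c d : R) :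
    !![e, 0, 0; a, b, c; 0, 0, d].det = e * b * d := by
  simp [Matrix.det_fin_three]

theorem hasDerivAt_r1f2_y (α0 α1 t x y z : ℂ) :
    HasDerivAt (fun s => r1f2 α0 α1 t x s z) (-z ^ 2) y := by
  have h_affine : (fun s => r1f2 α0 α1 t x s z) =
      fun s => -z ^ 2 * s - (2 * (2 * α1 - 1) * x + 2 * α0) / t ^ 2 * z := by
    ext s; simp only [r1f2]; ring
  rw [h_affine]
  exact ((hasDerivAt_id y).const_mul (-z ^ 2)).sub_const _ |>.congr_deriv (mul_one _)

theorem hasDerivAt_r1f3_z (α0 α1 t x y : ℂ) {z : ℂ} (hz : z ≠ 0) :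
    HasDerivAt (fun s => r1f3 α0 α1 t x y s) (-(z ^ 2)⁻¹) z := by
  simpa [r1f3] using hasDerivAt_inv hz

theorem differentiableAt_r1 (α0 α1 t x y : ℂ) {z : ℂ} (hz : z ≠ 0) :
    DifferentiableAt ℂ (fun P : ℂ × ℂ × ℂ =>
      (r1f1 α0 α1 t P.1 P.2.1 P.2.2, r1f2 α0 α1 t P.1 P.2.1 P.2.2,
        r1f3 α0 α1 t P.1 P.2.1 P.2.2)) (x, y, z) := by
  unfold r1f1 r1f2 r1f3
  fun_prop (disch := assumption)

theorem r1_preserves_three_form_general (α0 α1 t : ℂ) :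
    ∀ x y z : ℂ, z ≠ 0 →
      DifferentiableAt ℂ (fun P : ℂ × ℂ × ℂ =>
          (r1f1 α0 α1 t P.1 P.2.1 P.2.2,
           r1f2 α0 α1 t P.1 P.2.1 P.2.2,
           r1f3 α0 α1 t P.1 P.2.1 P.2.2)) (x, y, z) ∧
      Matrix.det
        !![deriv (fun s => r1f1 α0 α1 t s y z) x,
           deriv (fun s => r1f1 α0 α1 t x s z) y,
           deriv (fun s => r1f1 α0 α1 t x y s) z;
           deriv (fun s => r1f2 α0 α1 t s y z) x,
           deriv (fun s => r1f2 α0 α1 t x s z) y,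
           deriv (fun s => r1f2 α0 α1 t x y s) z;
           deriv (fun s => r1f3 α0 α1 t s y z) x,
           deriv (fun s => r1f3 α0 α1 t x s z) y,
           deriv (fun s => r1f3 α0 α1 t x y s) z] = 1 := by
  intro x y z hz
  refine ⟨differentiableAt_r1 α0 α1 t x y hz, ?_⟩
  rw [(hasDerivAt_r1f2_y α0 α1 t x y z).deriv, (hasDerivAt_r1f3_z α0 α1 t x y hz).deriv]
  simp only [r1f1, r1f3, deriv_id'', deriv_const']
  rw [Matrix.det_fin_three_of_outer_rows_diagonal]
  field_simp

/-- The transition map `r₁ : (x,y,z) ↦ (x, −(yz + (2(2α1−1)x + 2α0)/t²)z, 1/z)`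
is differentiable on `{z ≠ 0}` and its Jacobian determinant is identically `1`;
in particular it preserves the 3-form `dx ∧ dy ∧ dz`. -/
theorem r1_preserves_three_form (α0 α1 t : ℂ) (ht : t ≠ 0) :
    ∀ x y z : ℂ, z ≠ 0 →
      DifferentiableAt ℂ (fun P : ℂ × ℂ × ℂ =>
          (r1f1 α0 α1 t P.1 P.2.1 P.2.2,
           r1f2 α0 α1 t P.1 P.2.1 P.2.2,
           r1f3 α0 α1 t P.1 P.2.1 P.2.2)) (x, y, z) ∧
      Matrix.det
        !![deriv (fun s => r1f1 α0 α1 t s y z) x,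
           deriv (fun s => r1f1 α0 α1 t x s z) y,
           deriv (fun s => r1f1 α0 α1 t x y s) z;
           deriv (fun s => r1f2 α0 α1 t s y z) x,
           deriv (fun s => r1f2 α0 α1 t x s z) y,
           deriv (fun s => r1f2 α0 α1 t x y s) z;
           deriv (fun s => r1f3 α0 α1 t s y z) x,
           deriv (fun s => r1f3 α0 α1 t x s z) y,
           deriv (fun s => r1f3 α0 α1 t x y s) z] = 1 :=
  r1_preserves_three_form_general α0 α1 t
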